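/- Let R be a ring (associative with identity, not necessarily commutative). Then R is uniquely D-nil-clean if and only if R is a D-ring, or the following three conditions hold: (1) R is abelian; (2) R is periodic; and (3) R/J(R) is a Boolean ring. -/

import Mathlib

/-!
A non-nilpotent zero-divisor `a = w + e` forces an idempotent `e ≠ 0, 1`. Comparing the
decompositions `e = 0 + e = -u + (e + u)` with the square-zero `u = e y (1 - e)` shows that every
idempotent is central. For a central `e ≠ 0, 1` all `e x` and `(1 - e) x` are zero-divisors, so
`x² - x` is nilpotent for every `x`, and `x` differs by a nilpotent from an idempotent in `x R`.
In an abelian ring an idempotent `e = a w b` with `w` nilpotent vanishes (the central idempotent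
`w b e a` is a multiple of every power of `w`), so nilpotents lie in `J(R)` and `R/J(R)` is
Boolean. Since `2` is nilpotent, high powers of `x = (x - e) + e` are determined by finitely many
binomial coefficients modulo a power of `2`, so `x` is periodic.

Conversely, a periodic element of `J(R)` is nilpotent, because `1 - J(R)` consists of units; so
`a² - a` is nilpotent for every `a`, and `a` is nil-clean, uniquely since idempotents are central.
In a D-ring every idempotent is `0` or `1`, and `1` cannot occur in a decomposition of a
zero-divisor.
-/

universe u v

/-- An element `e` is a very idempotent if `e` or `-e` is an idempotent. -/
def IsVeryIdempotent {R : Type u} [Ring R] (e : R) : Prop :=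
  IsIdempotentElem e ∨ IsIdempotentElem (-e)

/-- `a` is uniquely weakly nil-clean: it is a sum of a nilpotent and a very idempotent,
and for any two such representations `a = w₁ + e₁ = w₂ + e₂` one has `e₁ ^ 2 = e₂ ^ 2`. -/
def IsUniquelyWeaklyNilClean {R : Type u} [Ring R] (a : R) : Prop :=
  (∃ w e : R, IsNilpotent w ∧ IsVeryIdempotent e ∧ a = w + e) ∧
  ∀ w₁ e₁ w₂ e₂ : R, IsNilpotent w₁ → IsVeryIdempotent e₁ → IsNilpotent w₂ →
    IsVeryIdempotent e₂ → a = w₁ + e₁ → a = w₂ + e₂ → e₁ ^ 2 = e₂ ^ 2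

/-- A ring is uniquely weakly nil-clean if every element is. -/
def UniquelyWeaklyNilCleanRing (R : Type u) [Ring R] : Prop :=
  ∀ a : R, IsUniquelyWeaklyNilClean a

/-- `a` is uniquely nil-clean: it is a sum of a nilpotent and an idempotent,
and for any two such representations `a = w₁ + e₁ = w₂ + e₂` one has `e₁ = e₂`. -/
def IsUniquelyNilClean {R : Type u} [Ring R] (a : R) : Prop :=
  (∃ w e : R, IsNilpotent w ∧ IsIdempotentElem e ∧ a = w + e) ∧
  ∀ w₁ e₁ w₂ e₂ : R, IsNilpotent w₁ → IsIdempotentElem e₁ → IsNilpotent w₂ →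
    IsIdempotentElem e₂ → a = w₁ + e₁ → a = w₂ + e₂ → e₁ = e₂

/-- A ring is uniquely nil-clean if every element is. -/
def UniquelyNilCleanRing (R : Type u) [Ring R] : Prop :=
  ∀ a : R, IsUniquelyNilClean a

/-- `a` is a zero-divisor: there are nonzero `b, c` with `a * b = 0` and `c * a = 0`. -/
def IsZeroDivisorPair {R : Type u} [Ring R] (a : R) : Prop :=
  ∃ b c : R, b ≠ 0 ∧ c ≠ 0 ∧ a * b = 0 ∧ c * a = 0

/-- A ring is abelian if every idempotent is central. -/
def AbelianRing (R : Type u) [Ring R] : Prop :=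
  ∀ e : R, IsIdempotentElem e → ∀ x : R, e * x = x * e

/-- A ring is periodic if every element satisfies `a ^ m = a ^ n` for distinct positive `m, n`. -/
def PeriodicRing (R : Type u) [Ring R] : Prop :=
  ∀ a : R, ∃ m n : ℕ, 0 < m ∧ 0 < n ∧ m ≠ n ∧ a ^ m = a ^ n

/-- A Boolean ring: every element is idempotent. -/
def IsBooleanRing (R : Type u) [Ring R] : Prop :=
  ∀ a : R, IsIdempotentElem a

/-- `R / J(R)` is isomorphic to `S`, expressed via a surjective ring homomorphism
whose kernel is exactly the Jacobson radical of `R`. -/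
def QuotJacobsonIsoTo (R : Type u) [Ring R] (S : Type v) [Ring S] : Prop :=
  ∃ f : R →+* S, Function.Surjective f ∧
    ∀ a : R, f a = 0 ↔ a ∈ Ideal.jacobson (⊥ : Ideal R)

section

variable {R : Type u} [Ring R]

theorem IsZeroDivisorPair.not_isUnit {a : R} (ha : IsZeroDivisorPair a) : ¬ IsUnit a := by
  obtain ⟨b, -, hb, -, hab, -⟩ := ha
  exact fun hu => hb (hu.mul_right_eq_zero.mp hab)

theorem IsZeroDivisorPair.ne_one_of_eq_add {a w e : R} (ha : IsZeroDivisorPair a)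
    (hw : IsNilpotent w) (h : a = w + e) : e ≠ 1 := by
  rintro rfl
  exact ha.not_isUnit (h ▸ hw.isUnit_add_one)

theorem isZeroDivisorPair_of_isIdempotentElem {e : R} (he : IsIdempotentElem e) (h1 : e ≠ 1) :
    IsZeroDivisorPair e :=
  have h : 1 - e ≠ 0 := sub_ne_zero.mpr h1.symm
  ⟨1 - e, 1 - e, h, h, he.mul_one_sub_self, he.one_sub_mul_self⟩

theorem IsUniquelyNilClean.one_sub {a : R} (ha : IsUniquelyNilClean a) :
    IsUniquelyNilClean (1 - a) := by
  obtain ⟨⟨w, e, hw, he, hwe⟩, huniq⟩ := ha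
  refine ⟨⟨-w, 1 - e, hw.neg, he.one_sub, by rw [hwe]; abel⟩, ?_⟩
  intro w₁ e₁ w₂ e₂ hw₁ he₁ hw₂ he₂ h₁ h₂
  refine sub_right_injective (huniq (-w₁) (1 - e₁) (-w₂) (1 - e₂) hw₁.neg he₁.one_sub hw₂.neg
    he₂.one_sub ?_ ?_)
  · rw [← sub_sub_cancel 1 a, h₁]; abel
  · rw [← sub_sub_cancel 1 a, h₂]; abel

theorem IsUniquelyNilClean.mul_mul_one_sub_eq_zero {e : R} (hu : IsUniquelyNilClean e)
    (he : IsIdempotentElem e) (y : R) : e * y * (1 - e) = 0 := by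
  set u := e * y * (1 - e)
  have hue : u * e = 0 := by simp only [u, mul_assoc, he.one_sub_mul_self, mul_zero]
  have heu : e * u = u := by simp only [u, ← mul_assoc, he.eq]
  have huu : u * u = 0 := by
    rw [show u * u = u * e * (y * (1 - e)) by simp only [u, mul_assoc], hue, zero_mul]
  have hidem : IsIdempotentElem (e + u) := by
    rw [IsIdempotentElem, add_mul, mul_add, mul_add, he.eq, heu, hue, huu, add_zero, add_zero]
  have := hu.2 (-u) (e + u) 0 e ⟨2, by rw [neg_sq, sq, huu]⟩ hidem IsNilpotent.zero he
    (by abel) (by abel)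
  simpa using this

theorem IsUniquelyNilClean.commute_of_isIdempotentElem {e : R} (hu : IsUniquelyNilClean e)
    (he : IsIdempotentElem e) (y : R) : Commute e y := by
  have h₁ := hu.mul_mul_one_sub_eq_zero he y
  have h₂ := hu.one_sub.mul_mul_one_sub_eq_zero he.one_sub y
  rw [mul_sub, mul_one, sub_eq_zero] at h₁
  rw [sub_sub_cancel, sub_mul, sub_mul, one_mul, sub_eq_zero] at h₂
  exact h₁.trans h₂.symm

theorem abelianRing_of_forall_isUniquelyNilClean
    (H : ∀ a : R, IsZeroDivisorPair a → IsUniquelyNilClean a) : AbelianRing R := by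
  intro e he x
  obtain rfl | h1 := eq_or_ne e 1
  · simp
  exact (H e (isZeroDivisorPair_of_isIdempotentElem he h1)).commute_of_isIdempotentElem he x

theorem eq_zero_or_eq_one_of_isIdempotentElem
    (hD : ∀ a : R, IsZeroDivisorPair a → IsNilpotent a) {e : R} (he : IsIdempotentElem e) :
    e = 0 ∨ e = 1 :=
  or_iff_not_imp_right.mpr fun h1 =>
    he.eq_zero_of_isNilpotent (hD e (isZeroDivisorPair_of_isIdempotentElem he h1))

theorem isUniquelyNilClean_of_forall_isZeroDivisorPair_isNilpotent
    (hD : ∀ a : R, IsZeroDivisorPair a → IsNilpotent a) {a : R} (ha : IsZeroDivisorPair a) :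
    IsUniquelyNilClean a := by
  have key : ∀ w e : R, IsNilpotent w → IsIdempotentElem e → a = w + e → e = 0 :=
    fun w e hw he h =>
      (eq_zero_or_eq_one_of_isIdempotentElem hD he).resolve_right (ha.ne_one_of_eq_add hw h)
  refine ⟨⟨a, 0, hD a ha, .zero, (add_zero a).symm⟩, ?_⟩
  intro w₁ e₁ w₂ e₂ hw₁ he₁ hw₂ he₂ h₁ h₂
  rw [key w₁ e₁ hw₁ he₁ h₁, key w₂ e₂ hw₂ he₂ h₂]

open Polynomial in
theorem exists_isIdempotentElem_isNilpotent_sub {x : R} (h : IsNilpotent (x ^ 2 - x)) :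
    ∃ e c : R, IsIdempotentElem e ∧ IsNilpotent (x - e) ∧ Commute x c ∧ e = x * c := by
  obtain ⟨n, hn⟩ := h.neg
  rw [neg_sub] at hn
  have hN : (x - x ^ 2) ^ (n + 1) = 0 := by rw [pow_succ, hn, zero_mul]
  set N := n + 1
  set P : ℤ[X] := 1 - (1 - X ^ N) ^ N
  have hXP : X ∣ P := by
    have := sub_dvd_pow_sub_pow (1 : ℤ[X]) (1 - X ^ N) N
    rw [sub_sub_cancel, one_pow] at this
    exact (dvd_pow_self X (Nat.succ_ne_zero n)).trans this
  have hX1 : X - 1 ∣ X - P := by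
    have h1 : X - 1 ∣ (1 - X ^ N : ℤ[X]) := by
      simpa [one_pow, neg_sub] using (sub_dvd_pow_sub_pow (X : ℤ[X]) 1 N).neg_right
    have h2 := dvd_add (dvd_refl (X - 1 : ℤ[X])) (h1.trans (dvd_pow_self _ (Nat.succ_ne_zero n)))
    rwa [show (X - 1 : ℤ[X]) + (1 - X ^ N) ^ N = X - P by simp only [P]; ring] at h2
  obtain ⟨Q, hQ⟩ : X * (X - 1) ∣ X - P :=
    IsCoprime.mul_dvd ⟨1, -1, by ring⟩ (dvd_sub dvd_rfl hXP) hX1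
  obtain ⟨C, hC⟩ := hXP
  refine ⟨aeval x P, aeval x C, ?_, ?_, by simpa using (Commute.all X C).map (aeval x), ?_⟩
  · simpa [P] using isIdempotentElem_one_sub_one_sub_pow_pow x N hN
  · have hcomm : Commute (x ^ 2 - x) (aeval x Q) := by
      have := (Commute.all (X ^ 2 - X) Q).map (aeval x)
      rwa [map_sub, map_pow, aeval_X] at this
    have : x - aeval x P = (x ^ 2 - x) * aeval x Q := by
      simpa [sq, mul_sub] using congrArg (aeval x) hQ
    rw [this]
    exact hcomm.isNilpotent_mul_right h
  · simpa using congrArg (aeval x) hC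

theorem isNilpotent_sq_sub_of_commute {w f : R} (hw : IsNilpotent w) (hf : IsIdempotentElem f)
    (hwf : Commute w f) : IsNilpotent ((w + f) ^ 2 - (w + f)) := by
  have h : (w + f) ^ 2 - (w + f) = w * (w + 2 * f - 1) := by
    rw [hwf.add_sq, sq f, hf.eq]
    noncomm_ring
  rw [h]
  refine Commute.isNilpotent_mul_right ?_ hw
  exact ((Commute.refl w).add_right ((Commute.ofNat_right w 2).mul_right hwf)).sub_right
    (Commute.one_right w)

theorem AbelianRing.eq_of_add_eq_add (hab : AbelianRing R) {w₁ e₁ w₂ e₂ : R}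
    (hw₁ : IsNilpotent w₁) (he₁ : IsIdempotentElem e₁) (hw₂ : IsNilpotent w₂)
    (he₂ : IsIdempotentElem e₂) (h : w₁ + e₁ = w₂ + e₂) : e₁ = e₂ := by
  have hw : w₁ = w₂ + (e₂ - e₁) := by rw [add_sub, ← h]; abel
  have hcomm : Commute w₂ w₁ := by
    rw [hw]
    exact (Commute.refl w₂).add_right (Commute.sub_right (hab e₂ he₂ w₂).symm (hab e₁ he₁ w₂).symm)
  refine eq_of_isNilpotent_sub_of_isIdempotentElem_of_commute he₁ he₂ ?_ (hab e₁ he₁ e₂)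
  rw [sub_eq_sub_iff_add_eq_add.mpr (by rw [add_comm]; exact h : e₁ + w₁ = w₂ + e₂)]
  exact hcomm.isNilpotent_sub hw₂ hw₁

theorem AbelianRing.isUniquelyNilClean_of_isNilpotent_sq_sub (hab : AbelianRing R) {a : R}
    (ha : IsNilpotent (a ^ 2 - a)) : IsUniquelyNilClean a := by
  obtain ⟨e, -, he, hae, -, -⟩ := exists_isIdempotentElem_isNilpotent_sub ha
  refine ⟨⟨a - e, e, hae, he, (sub_add_cancel a e).symm⟩, ?_⟩
  intro w₁ e₁ w₂ e₂ hw₁ he₁ hw₂ he₂ h₁ h₂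
  exact hab.eq_of_add_eq_add hw₁ he₁ hw₂ he₂ (h₁.symm.trans h₂)

theorem AbelianRing.isNilpotent_sq_sub_of_isUniquelyNilClean (hab : AbelianRing R) {b : R}
    (hb : IsUniquelyNilClean b) : IsNilpotent (b ^ 2 - b) := by
  obtain ⟨w, f, hw, hf, rfl⟩ := hb.1
  exact isNilpotent_sq_sub_of_commute hw hf (hab f hf w).symm

theorem AbelianRing.isZeroDivisorPair_mul (hab : AbelianRing R) {e : R} (he : IsIdempotentElem e)
    (h1 : e ≠ 1) (x : R) : IsZeroDivisorPair (e * x) :=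
  have h : 1 - e ≠ 0 := sub_ne_zero.mpr h1.symm
  ⟨1 - e, 1 - e, h, h, by rw [hab e he x, mul_assoc, he.mul_one_sub_self, mul_zero],
    by rw [← mul_assoc, he.one_sub_mul_self, zero_mul]⟩

theorem AbelianRing.mul_sq_sub (hab : AbelianRing R) {e : R} (he : IsIdempotentElem e) (x : R) :
    (e * x) ^ 2 - e * x = e * (x ^ 2 - x) := by
  rw [Commute.mul_pow (hab e he x), he.pow_eq two_ne_zero, mul_sub]

theorem AbelianRing.forall_isNilpotent_sq_sub (hab : AbelianRing R)
    (H : ∀ a : R, IsZeroDivisorPair a → IsUniquelyNilClean a) {e : R} (he : IsIdempotentElem e)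
    (h0 : e ≠ 0) (h1 : e ≠ 1) (x : R) : IsNilpotent (x ^ 2 - x) := by
  have nil_of : ∀ f : R, IsIdempotentElem f → f ≠ 1 → IsNilpotent (f * (x ^ 2 - x)) :=
    fun f hf hf1 => hab.mul_sq_sub hf x ▸
      hab.isNilpotent_sq_sub_of_isUniquelyNilClean (H _ (hab.isZeroDivisorPair_mul hf hf1 x))
  have hc : Commute (e * (x ^ 2 - x)) ((1 - e) * (x ^ 2 - x)) :=
    Commute.mul_left (hab e he _) (Commute.mul_right (hab (1 - e) he.one_sub _).symm (.refl _))
  have := hc.isNilpotent_add (nil_of e he h1) (nil_of (1 - e) he.one_sub (by simpa using h0))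
  rwa [← add_mul, add_sub_cancel, one_mul] at this

theorem AbelianRing.mul_eq_zero_of_isNilpotent_of_isIdempotentElem (hab : AbelianRing R)
    {w g : R} (hw : IsNilpotent w) (he : IsIdempotentElem (w * g)) : w * g = 0 := by
  obtain ⟨k, hk⟩ := hw
  set F := w * g with hF
  have key : ∀ j : ℕ, F = w ^ (j + 1) * g ^ (j + 1) := by
    intro j
    induction j with
    | zero => rw [pow_one, pow_one]
    | succ j ih =>
      calc F = F * F := he.eq.symm
        _ = w * (F * g) := by rw [hab F he g]; nth_rw 1 [hF]; rw [mul_assoc]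
        _ = w ^ (j + 2) * g ^ (j + 2) := by
          rw [ih, pow_succ' w (j + 1), pow_succ g (j + 1)]; simp only [mul_assoc]
  rw [key k, pow_succ, hk, zero_mul, zero_mul]

theorem AbelianRing.mul_mul_eq_zero_of_isNilpotent_of_isIdempotentElem (hab : AbelianRing R)
    {a w b : R} (hw : IsNilpotent w) (he : IsIdempotentElem (a * w * b)) : a * w * b = 0 := by
  obtain ⟨e, he_def⟩ : ∃ e, e = a * w * b := ⟨_, rfl⟩
  rw [← he_def] at he ⊢
  have hF : IsIdempotentElem (w * (b * e * a)) := by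
    calc w * (b * e * a) * (w * (b * e * a)) = w * (b * (e * (a * w * b) * e) * a) := by
          simp only [mul_assoc]
      _ = w * (b * e * a) := by rw [← he_def, he.eq, he.eq]
  have he3 : e = a * w * b * e * (a * w * b) := by rw [← he_def, he.eq, he.eq]
  calc e = a * (w * (b * e * a)) * w * b := by
        conv_lhs => rw [he3]
        simp only [mul_assoc]
    _ = 0 := by rw [hab.mul_eq_zero_of_isNilpotent_of_isIdempotentElem hw hF, mul_zero,
        zero_mul, zero_mul]

theorem AbelianRing.isNilpotent_mul_of_isNilpotent (hab : AbelianRing R)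
    (hall : ∀ x : R, IsNilpotent (x ^ 2 - x)) {w : R} (hw : IsNilpotent w) (a : R) :
    IsNilpotent (a * w) := by
  obtain ⟨e, c, he, hxe, -, rfl⟩ := exists_isIdempotentElem_isNilpotent_sub (hall (a * w))
  rwa [hab.mul_mul_eq_zero_of_isNilpotent_of_isIdempotentElem hw he, sub_zero] at hxe

theorem AbelianRing.mem_jacobson_of_isNilpotent (hab : AbelianRing R)
    (hall : ∀ x : R, IsNilpotent (x ^ 2 - x)) {w : R} (hw : IsNilpotent w) :
    w ∈ Ideal.jacobson (⊥ : Ideal R) := by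
  refine Ideal.mem_jacobson_iff.mpr fun y => ?_
  obtain ⟨z, hz⟩ := (hab.isNilpotent_mul_of_isNilpotent hall hw y).isUnit_add_one.exists_left_inv
  exact ⟨z, by rw [Ideal.mem_bot, ← hz]; noncomm_ring⟩

theorem exists_mul_one_sub_eq_one_of_mem_jacobson {t : R}
    (ht : t ∈ Ideal.jacobson (⊥ : Ideal R)) : ∃ z, z * (1 - t) = 1 := by
  obtain ⟨z, hz⟩ := Ideal.mem_jacobson_iff.mp ht (-1)
  rw [Ideal.mem_bot] at hz
  exact ⟨z, by rw [← sub_eq_zero, ← hz]; noncomm_ring⟩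

theorem isNilpotent_of_mem_jacobson_of_pow_eq_pow {t : R} (ht : t ∈ Ideal.jacobson (⊥ : Ideal R))
    {m n : ℕ} (hmn : m ≠ n) (h : t ^ m = t ^ n) : IsNilpotent t := by
  wlog hlt : m < n generalizing m n
  · exact this hmn.symm h.symm (by omega)
  obtain ⟨d, rfl⟩ := Nat.exists_eq_add_of_lt hlt
  obtain ⟨z, hz⟩ := exists_mul_one_sub_eq_one_of_mem_jacobson (Ideal.mul_mem_left _ (t ^ d) ht)
  refine ⟨m, ?_⟩
  calc t ^ m = z * (1 - t ^ d * t) * t ^ m := by rw [hz, one_mul]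
    _ = z * (t ^ m - t ^ (m + d + 1)) := by
      rw [mul_assoc, sub_mul, one_mul, ← pow_succ, ← pow_add, show d + 1 + m = m + d + 1 by omega]
    _ = 0 := by rw [← h, sub_self, mul_zero]

theorem isNilpotent_sq_sub_of_quotJacobsonIsoTo {S : Type v} [Ring S] (hper : PeriodicRing R)
    (hS : IsBooleanRing S) (hRS : QuotJacobsonIsoTo R S) (a : R) : IsNilpotent (a ^ 2 - a) := by
  obtain ⟨f, -, hf⟩ := hRS
  have hJ : a ^ 2 - a ∈ Ideal.jacobson (⊥ : Ideal R) :=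
    (hf _).mp (by rw [map_sub, map_pow, sq, (hS (f a)).eq, sub_self])
  obtain ⟨m, n, -, -, hmn, h⟩ := hper (a ^ 2 - a)
  exact isNilpotent_of_mem_jacobson_of_pow_eq_pow hJ hmn h

theorem quotJacobsonIsoTo_quotient : QuotJacobsonIsoTo R (R ⧸ Ideal.jacobson (⊥ : Ideal R)) :=
  ⟨Ideal.Quotient.mk _, Ideal.Quotient.mk_surjective, fun _ => Ideal.Quotient.eq_zero_iff_mem⟩

theorem isBooleanRing_quotient_jacobson (h : ∀ x : R, x ^ 2 - x ∈ Ideal.jacobson (⊥ : Ideal R)) :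
    IsBooleanRing (R ⧸ Ideal.jacobson (⊥ : Ideal R)) := by
  intro s
  obtain ⟨x, rfl⟩ := Ideal.Quotient.mk_surjective s
  rw [IsIdempotentElem, ← map_mul, Ideal.Quotient.eq, ← sq]
  exact h x

theorem exists_pow_eq_pow_of_isNilpotent_add_isIdempotentElem {N : ℕ} [NeZero N]
    (hN : (N : R) = 0) {n e : R} (hn : IsNilpotent n) (he : IsIdempotentElem e)
    (hne : Commute n e) : ∃ m k : ℕ, 0 < m ∧ 0 < k ∧ m ≠ k ∧ (n + e) ^ m = (n + e) ^ k := by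
  obtain ⟨K, hK⟩ := hn
  let φ : ZMod N →+* R := ZMod.castHom (ringChar.dvd hN) R
  have expand : ∀ m, K ≤ m →
      (n + e) ^ (m + 1) = ∑ i ∈ Finset.range K, n ^ i * e * φ ((m + 1).choose i) := by
    intro m hm
    rw [hne.add_pow]
    refine (Finset.sum_subset (Finset.range_subset_range.mpr (by omega)) ?_).symm.trans
      (Finset.sum_congr rfl fun i hi => ?_)
    · intro i _ hi
      rw [pow_eq_zero_of_le (not_lt.mp (Finset.mem_range.not.mp hi)) hK, zero_mul, zero_mul]
    · rw [map_natCast, he.pow_eq (by have := Finset.mem_range.mp hi; omega)]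
  obtain ⟨m₁, m₂, hm, heq⟩ := Finite.exists_ne_map_eq_of_infinite
    fun m : ℕ => fun i : Fin K => ((m + K + 1).choose i : ZMod N)
  refine ⟨m₁ + K + 1, m₂ + K + 1, by omega, by omega, by omega, ?_⟩
  rw [expand _ (by omega), expand _ (by omega)]
  exact Finset.sum_congr rfl fun i hi =>
    congrArg (n ^ i * e * φ ·) (congrFun heq ⟨i, Finset.mem_range.mp hi⟩)

theorem periodicRing_of_forall_isNilpotent_sq_sub (hall : ∀ x : R, IsNilpotent (x ^ 2 - x)) :
    PeriodicRing R := by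
  obtain ⟨q, hq⟩ : IsNilpotent (2 : R) := by simpa [one_add_one_eq_two] using hall (-1)
  have : NeZero (2 ^ q) := ⟨pow_ne_zero _ two_ne_zero⟩
  intro x
  obtain ⟨e, c, he, hxe, hxc, hec⟩ := exists_isIdempotentElem_isNilpotent_sub (hall x)
  have hxe_comm : Commute (x - e) e := by
    rw [hec]
    exact ((Commute.refl x).mul_right hxc).sub_left (Commute.refl _)
  simpa using exists_pow_eq_pow_of_isNilpotent_add_isIdempotentElem (N := 2 ^ q)
    (by push_cast; exact hq) hxe he hxe_comm

end

theorem stmt17 (R : Type u) [Ring R] :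
    (∀ a : R, IsZeroDivisorPair a → IsUniquelyNilClean a) ↔
      ((∀ a : R, IsZeroDivisorPair a → IsNilpotent a) ∨
        (AbelianRing R ∧ PeriodicRing R ∧
          ∃ (S : Type u) (_ : Ring S), IsBooleanRing S ∧ QuotJacobsonIsoTo R S)) := by
  constructor
  · intro H
    refine or_iff_not_imp_left.mpr fun hD => ?_
    obtain ⟨a, ha, ha_nil⟩ := not_forall₂.mp hD
    obtain ⟨⟨w, e, hw, he, hwe⟩, -⟩ := H a ha
    have he0 : e ≠ 0 := by rintro rfl; exact ha_nil (by rwa [hwe, add_zero])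
    have hab := abelianRing_of_forall_isUniquelyNilClean H
    have hall := hab.forall_isNilpotent_sq_sub H he he0 (ha.ne_one_of_eq_add hw hwe)
    exact ⟨hab, periodicRing_of_forall_isNilpotent_sq_sub hall, _, inferInstance,
      isBooleanRing_quotient_jacobson fun x => hab.mem_jacobson_of_isNilpotent hall (hall x),
      quotJacobsonIsoTo_quotient⟩
  · rintro (hD | ⟨hab, hper, S, _, hS, hRS⟩)
    · exact fun a => isUniquelyNilClean_of_forall_isZeroDivisorPair_isNilpotent hD
    · exact fun a _ => hab.isUniquelyNilClean_of_isNilpotent_sq_sub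
        (isNilpotent_sq_sub_of_quotJacobsonIsoTo hper hS hRS a)
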